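/- Let H be a connected graph and let (G, S) be a rooted graph such that G is an H-subdivision in which every cycle is an S-cycle. Then G contains a vertex set U ⊆ S such that |U| ≤ |E(H)| − |V(H)| + 1 and G − U has no cycles. -/

import Mathlib

open scoped Classical

/-- A finite multigraph (possibly with loops and parallel edges), with vertices and
edges labelled by natural numbers. `ends e` gives the (unordered) pair of endpoints. -/
structure Multigraph where
  verts : Finset ℕ
  edges : Finset ℕ
  ends : ℕ → Sym2 ℕ
  ends_mem : ∀ e ∈ edges, ∀ x ∈ ends e, x ∈ verts

namespace Multigraph

/-- `W` is a subgraph of `G`. -/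
def IsSubgraph (W G : Multigraph) : Prop :=
  W.verts ⊆ G.verts ∧ W.edges ⊆ G.edges ∧ ∀ e ∈ W.edges, W.ends e = G.ends e

/-- Delete a set of vertices (and all incident edges). -/
noncomputable def deleteVerts (G : Multigraph) (T : Finset ℕ) : Multigraph where
  verts := G.verts \ T
  edges := G.edges.filter (fun e => ∀ x ∈ G.ends e, x ∉ T)
  ends := G.ends
  ends_mem := by
    intro e he x hx
    rw [Finset.mem_filter] at he
    rw [Finset.mem_sdiff]
    exact ⟨G.ends_mem e he.1 x hx, he.2 x hx⟩

/-- Delete a set of edges. -/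
def deleteEdges (G : Multigraph) (X : Finset ℕ) : Multigraph where
  verts := G.verts
  edges := G.edges \ X
  ends := G.ends
  ends_mem := fun e he x hx => G.ends_mem e (Finset.mem_sdiff.mp he).1 x hx

/-- Union of two multigraphs. -/
noncomputable def union (W X : Multigraph) : Multigraph where
  verts := W.verts ∪ X.verts
  edges := W.edges ∪ X.edges
  ends := fun e => if e ∈ W.edges then W.ends e else X.ends e
  ends_mem := by
    intro e he x hx
    rw [Finset.mem_union] at he ⊢
    by_cases h : e ∈ W.edges
    · simp only [h, if_true] at hx
      exact Or.inl (W.ends_mem e h x hx)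
    · simp only [h, if_false] at hx
      exact Or.inr (X.ends_mem e (he.resolve_left h) x hx)

/-- The degree of a vertex in a multigraph; a loop contributes 2. -/
noncomputable def degree (W : Multigraph) (v : ℕ) : ℕ :=
  ∑ e ∈ W.edges, (if W.ends e = s(v, v) then 2 else if v ∈ W.ends e then 1 else 0)

/-- `vs = [v₀, …, vₙ]`, `es = [e₁, …, eₙ]` form a walk in `G`
(the `i`-th edge joins the `i`-th and `(i+1)`-st vertices). -/
def IsWalk (G : Multigraph) (vs es : List ℕ) : Prop :=
  vs.length = es.length + 1 ∧
  (∀ v ∈ vs, v ∈ G.verts) ∧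
  (∀ e ∈ es, e ∈ G.edges) ∧
  ∀ i, i < es.length → G.ends (es.getD i 0) = s(vs.getD i 0, vs.getD (i + 1) 0)

/-- `C` is a cycle of `G`: a subgraph of `G` consisting of (cyclically ordered) distinct
vertices `vs` and distinct edges `es`, the `i`-th edge joining consecutive vertices.
Loops and pairs of parallel edges count as cycles. -/
def IsCycleOf (G C : Multigraph) : Prop :=
  C.IsSubgraph G ∧
  ∃ vs es : List ℕ, vs.Nodup ∧ es.Nodup ∧ es ≠ [] ∧ vs.length = es.length ∧
    C.verts = vs.toFinset ∧ C.edges = es.toFinset ∧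
    ∀ i, i < es.length →
      C.ends (es.getD i 0) = s(vs.getD i 0, vs.getD ((i + 1) % vs.length) 0)

/-- An S-cycle of `(G, S)`: a cycle of `G` containing a vertex of `S`. -/
def IsSCycle (G : Multigraph) (S : Finset ℕ) (C : Multigraph) : Prop :=
  IsCycleOf G C ∧ (C.verts ∩ S).Nonempty

/-- `μ(G, S) ≤ 1`: there are no two vertex-disjoint S-cycles. -/
def MuLeOne (G : Multigraph) (S : Finset ℕ) : Prop :=
  ∀ C₁ C₂, IsSCycle G S C₁ → IsSCycle G S C₂ → ¬ Disjoint C₁.verts C₂.verts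

/-- `T` is an S-cycle hitting set of `(G, S)`. -/
def IsHittingSet (G : Multigraph) (S T : Finset ℕ) : Prop :=
  T ⊆ G.verts ∧ ∀ C, IsSCycle G S C → (C.verts ∩ T).Nonempty

/-- `τ(G, S) ≤ k`. -/
def TauLe (G : Multigraph) (S : Finset ℕ) (k : ℕ) : Prop :=
  ∃ T, IsHittingSet G S T ∧ T.card ≤ k

/-- `P` is a path graph with vertex list `vs` and edge list `es`. -/
def IsPathGraph (P : Multigraph) (vs es : List ℕ) : Prop :=
  vs.Nodup ∧ es.Nodup ∧ vs.length = es.length + 1 ∧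
  P.verts = vs.toFinset ∧ P.edges = es.toFinset ∧
  ∀ i, i < es.length → P.ends (es.getD i 0) = s(vs.getD i 0, vs.getD (i + 1) 0)

/-- `P` (with vertex list `vs` and edge list `es`) is a `W`-path in `G`:
a path with at least one edge, both endpoints in `W`, internal vertices outside `W`,
and using no edge of `W`. -/
def IsWPathList (G W P : Multigraph) (vs es : List ℕ) : Prop :=
  P.IsSubgraph G ∧ IsPathGraph P vs es ∧ es ≠ [] ∧
  vs.getD 0 0 ∈ W.verts ∧ vs.getD (vs.length - 1) 0 ∈ W.verts ∧
  (∀ i, 0 < i → i < vs.length - 1 → vs.getD i 0 ∉ W.verts) ∧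
  (∀ e ∈ es, e ∉ W.edges)

/-- `P` is a `W`-path in `G`. -/
def IsWPath (G W P : Multigraph) : Prop :=
  ∃ vs es, IsWPathList G W P vs es

/-- `P` is a `(W, F₁, F₂)`-path in `G`: a `W`-path with one endpoint in `F₁`
and the other in `F₂`. -/
def IsWPathBtw (G W P : Multigraph) (F₁ F₂ : Finset ℕ) : Prop :=
  ∃ vs es, IsWPathList G W P vs es ∧
    ((vs.getD 0 0 ∈ F₁ ∧ vs.getD (vs.length - 1) 0 ∈ F₂) ∨
     (vs.getD 0 0 ∈ F₂ ∧ vs.getD (vs.length - 1) 0 ∈ F₁))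

/-- `W` is an S-cycle subgraph of `(G, S)`: a subgraph whose every cycle is an S-cycle. -/
def IsSCycleSubgraph (G : Multigraph) (S : Finset ℕ) (W : Multigraph) : Prop :=
  W.IsSubgraph G ∧ ∀ C, IsCycleOf W C → (C.verts ∩ S).Nonempty

/-- `X` is a `W`-extension: a `W`-path such that `W ∪ X` is an S-cycle subgraph. -/
def IsWExtension (G : Multigraph) (S : Finset ℕ) (W X : Multigraph) : Prop :=
  IsWPath G W X ∧ IsSCycleSubgraph G S (W.union X)

/-- `G` is connected. -/
def Connected (G : Multigraph) : Prop :=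
  G.verts.Nonempty ∧
  ∀ u ∈ G.verts, ∀ v ∈ G.verts,
    ∃ vs es, IsWalk G vs es ∧ vs ≠ [] ∧ vs.getD 0 0 = u ∧ vs.getD (vs.length - 1) 0 = v

/-- `G` has no cycles. -/
def Acyclic (G : Multigraph) : Prop := ¬ ∃ C, IsCycleOf G C

/-- `X` separates the vertex sets `A` and `B` in `G`: after deleting `X`, there is no
walk from a vertex of `A` to a vertex of `B`. -/
def Separates (G : Multigraph) (X A B : Finset ℕ) : Prop :=
  ¬ ∃ vs es, IsWalk (G.deleteVerts X) vs es ∧ vs ≠ [] ∧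
      vs.getD 0 0 ∈ A ∧ vs.getD (vs.length - 1) 0 ∈ B

/-- `G` is a subdivision of `H`: each edge `e` of `H` is replaced by a path
(given by vertex list `pv e` and edge list `pe e`) between the images of its
endpoints under an injection `φ`; the paths are internally disjoint from each
other and from the branching vertices, and together they cover `G` exactly. -/
def IsSubdivisionOf (H G : Multigraph) : Prop :=
  ∃ (φ : ℕ → ℕ) (pv pe : ℕ → List ℕ),
    Set.InjOn φ ↑H.verts ∧
    (∀ v ∈ H.verts, φ v ∈ G.verts) ∧
    (∀ e ∈ H.edges,
      IsWalk G (pv e) (pe e) ∧ pe e ≠ [] ∧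
      (pv e).dropLast.Nodup ∧ (pv e).tail.Nodup ∧
      (∃ u v, H.ends e = s(u, v) ∧ (pv e).getD 0 0 = φ u ∧
        (pv e).getD ((pv e).length - 1) 0 = φ v) ∧
      (∀ x ∈ (pv e).tail.dropLast, ∀ w ∈ H.verts, x ≠ φ w)) ∧
    (∀ e ∈ H.edges, ∀ f ∈ H.edges, e ≠ f →
      (∀ x ∈ (pv e).tail.dropLast, x ∉ (pv f).toFinset) ∧
      (∀ a ∈ pe e, a ∉ pe f)) ∧
    G.verts = H.verts.image φ ∪ H.edges.biUnion (fun e => (pv e).toFinset) ∧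
    G.edges = H.edges.biUnion (fun e => (pe e).toFinset)

/-- `W` is an S-cycle `H`-subdivision in `(G, S)`: a subgraph of `G` that is a
subdivision of `H` and in which every cycle is an S-cycle. -/
def IsSCycleSubdivision (G : Multigraph) (S : Finset ℕ) (H W : Multigraph) : Prop :=
  W.IsSubgraph G ∧ IsSubdivisionOf H W ∧ ∀ C, IsCycleOf W C → (C.verts ∩ S).Nonempty

/-- Build a multigraph on vertex set `{0, …, n-1}` whose edges are `0, …, l.length - 1`,
with the `i`-th edge joining the pair `l[i]`. -/
def mkGraph (n : ℕ) (l : List (ℕ × ℕ)) (h : ∀ p ∈ l, p.1 < n ∧ p.2 < n) : Multigraph where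
  verts := Finset.range n
  edges := Finset.range l.length
  ends := fun e => s((l.getD e (0, 0)).1, (l.getD e (0, 0)).2)
  ends_mem := by
    intro e he x hx
    rw [Finset.mem_range] at he
    have hm : l.getD e (0, 0) ∈ l := by
      rw [List.getD_eq_getElem l (0, 0) he]
      exact List.getElem_mem he
    rw [Sym2.mem_iff] at hx
    rw [Finset.mem_range]
    rcases hx with h1 | h2
    · exact h1 ▸ (h _ hm).1
    · exact h2 ▸ (h _ hm).2

/-- `θ₃`: two vertices joined by three parallel edges. -/
def theta3 : Multigraph := mkGraph 2 [(0,1),(0,1),(0,1)] (by decide)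

/-- `K₃⁺`: the triangle with a parallel edge added to each of two distinct edges. -/
def K3plus : Multigraph := mkGraph 3 [(0,1),(1,2),(2,0),(0,1),(1,2)] (by decide)

/-- `K₃⁺⁺⁺`: the triangle with a parallel edge added to every edge and one further
parallel edge added to one edge. -/
def K3ppp : Multigraph := mkGraph 3 [(0,1),(1,2),(2,0),(0,1),(1,2),(2,0),(0,1)] (by decide)

/-- The complete graph `K₄`. -/
def K4 : Multigraph := mkGraph 4 [(0,1),(0,2),(0,3),(1,2),(1,3),(2,3)] (by decide)

/-- `K₄⁺⁺`: `K₄` with a parallel edge added to each of two incident edges. -/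
def K4pp : Multigraph := mkGraph 4 [(0,1),(0,2),(0,3),(1,2),(1,3),(2,3),(0,1),(0,2)] (by decide)

/-- `K₄⁺⁺⁺`: `K₄` with two parallel edges added to one edge. -/
def K4ppp : Multigraph := mkGraph 4 [(0,1),(0,2),(0,3),(1,2),(1,3),(2,3),(0,1),(0,1)] (by decide)

/-- The wheel `W₄`: a 4-cycle `0123` plus a hub `4` joined to all rim vertices. -/
def W4 : Multigraph := mkGraph 5 [(0,1),(1,2),(2,3),(3,0),(4,0),(4,1),(4,2),(4,3)] (by decide)

/-- `W₄⁺`: `W₄` with a parallel edge added between the hub and one rim vertex. -/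
def W4plus : Multigraph :=
  mkGraph 5 [(0,1),(1,2),(2,3),(3,0),(4,0),(4,1),(4,2),(4,3),(4,0)] (by decide)

/-- `W₄*`: `W₄` with an edge added between two rim vertices at distance 2. -/
def W4star : Multigraph :=
  mkGraph 5 [(0,1),(1,2),(2,3),(3,0),(4,0),(4,1),(4,2),(4,3),(0,2)] (by decide)

/-- The wheel `W₅`: a 5-cycle plus a hub joined to all rim vertices. -/
def W5 : Multigraph :=
  mkGraph 6 [(0,1),(1,2),(2,3),(3,4),(4,0),(5,0),(5,1),(5,2),(5,3),(5,4)] (by decide)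

/-- The complete bipartite graph `K₃,₃` with parts `{0,1,2}` and `{3,4,5}`. -/
def K33 : Multigraph :=
  mkGraph 6 [(0,3),(0,4),(0,5),(1,3),(1,4),(1,5),(2,3),(2,4),(2,5)] (by decide)

/-- `K₃,₃⁺`: `K₃,₃` with an edge added between two vertices in the same part. -/
def K33plus : Multigraph :=
  mkGraph 6 [(0,3),(0,4),(0,5),(1,3),(1,4),(1,5),(2,3),(2,4),(2,5),(0,1)] (by decide)

end Multigraph

/-!
Choose `U ⊆ S` inclusion-minimal such that `G - U` is acyclic; since every cycle of `G`
meets `S`, `U = S` is a candidate. By minimality each `u ∈ U` lies on a cycle `C_u` of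
`G - (U \ {u})`, and an edge of `C_u` at `u` lies on no other `C_w`. Hence the edge sets of the
`C_u` are linearly independent in the cycle space of `G` over `𝔽₂`, whose dimension is
`|E(G)| - |V(G)| + 1` because `G`, a subdivision of a connected graph, is connected.
Subdividing an edge adds as many vertices as edges, so this is `|E(H)| - |V(H)| + 1`.
-/

open Finset Module

lemma List.sum_map_eq_sum_range_getD {α M : Type*} [AddCommMonoid M] (f : α → M) (d : α) :
    ∀ l : List α, (l.map f).sum = ∑ i ∈ Finset.range l.length, f (l.getD i d)
  | [] => by simp
  | a :: l => by
    rw [List.map_cons, List.sum_cons, List.length_cons, Finset.sum_range_succ',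
      List.sum_map_eq_sum_range_getD f d l, add_comm]
    simp only [List.getD_cons_succ, List.getD_cons_zero]

lemma List.getD_length_sub_one_mem {α : Type*} {l : List α} (hl : l ≠ []) (d : α) :
    l.getD (l.length - 1) d ∈ l := by
  have hlt : l.length - 1 < l.length := Nat.sub_lt (List.length_pos_iff.2 hl) one_pos
  rw [List.getD_eq_getElem _ _ hlt]
  exact List.getElem_mem hlt

lemma Finset.sum_range_succ_mod {M : Type*} [AddCommMonoid M] (f : ℕ → M) (n : ℕ) :
    ∑ i ∈ range n, f ((i + 1) % n) = ∑ i ∈ range n, f i := by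
  cases n with
  | zero => simp
  | succ m =>
    rw [sum_range_succ, sum_range_succ', Nat.mod_self]
    congr 1
    exact sum_congr rfl fun i hi => by rw [Nat.mod_eq_of_lt (by simpa using hi)]

lemma linearIndependent_of_apply_eq_one_of_apply_eq_zero {ι κ R : Type*} [Fintype ι]
    [Ring R] (v : ι → κ → R) (c : ι → κ) (hdiag : ∀ i, v i (c i) = 1)
    (hoff : ∀ i j, i ≠ j → v j (c i) = 0) : LinearIndependent R v := by
  rw [Fintype.linearIndependent_iff]
  intro a ha i
  have hi := congrFun ha (c i)
  rw [Finset.sum_apply, sum_eq_single i (fun j _ hji => by simp [hoff i j hji.symm])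
    (by simp)] at hi
  simpa [hdiag] using hi

namespace Multigraph

lemma IsSubgraph.trans {A B C : Multigraph} (h₁ : A.IsSubgraph B) (h₂ : B.IsSubgraph C) :
    A.IsSubgraph C :=
  ⟨h₁.1.trans h₂.1, h₁.2.1.trans h₂.2.1,
    fun e he => (h₁.2.2 e he).trans (h₂.2.2 e (h₁.2.1 he))⟩

lemma deleteVerts_isSubgraph (G : Multigraph) (T : Finset ℕ) : (G.deleteVerts T).IsSubgraph G :=
  ⟨sdiff_subset, filter_subset _ _, fun _ _ => rfl⟩

lemma IsCycleOf.of_deleteVerts {G C : Multigraph} {T : Finset ℕ}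
    (hC : IsCycleOf (G.deleteVerts T) C) : IsCycleOf G C :=
  ⟨hC.1.trans (deleteVerts_isSubgraph G T), hC.2⟩

lemma IsCycleOf.deleteVerts {G C : Multigraph} {T : Finset ℕ} (hC : IsCycleOf G C)
    (hT : Disjoint C.verts T) : IsCycleOf (G.deleteVerts T) C := by
  obtain ⟨⟨hv, he, hends⟩, hcyc⟩ := hC
  refine ⟨⟨fun x hx => mem_sdiff.2 ⟨hv hx, disjoint_left.1 hT hx⟩,
    fun e heC => mem_filter.2 ⟨he heC, fun x hx => disjoint_left.1 hT ?_⟩, hends⟩, hcyc⟩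
  exact C.ends_mem e heC x (by rwa [hends e heC])

lemma IsCycleOf.exists_mem_edges_mem_ends {G C : Multigraph} (hC : IsCycleOf G C) {u : ℕ}
    (hu : u ∈ C.verts) : ∃ e ∈ C.edges, u ∈ G.ends e := by
  obtain ⟨hsub, vs, es, -, -, -, hlen, hCv, hCe, hends⟩ := hC
  obtain ⟨j, hj, rfl⟩ := List.mem_iff_getElem.1 (List.mem_toFinset.1 (hCv ▸ hu))
  have hj' : j < es.length := hlen ▸ hj
  have hmem : es.getD j 0 ∈ C.edges := by
    rw [hCe, List.mem_toFinset, List.getD_eq_getElem _ _ hj']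
    exact List.getElem_mem _
  refine ⟨es.getD j 0, hmem, ?_⟩
  rw [← hsub.2.2 _ hmem, hends j hj', List.getD_eq_getElem _ _ hj]
  exact Sym2.mem_mk_left _ _

lemma acyclic_deleteVerts_of_forall_inter_nonempty {G : Multigraph} {S : Finset ℕ}
    (hS : ∀ C, IsCycleOf G C → (C.verts ∩ S).Nonempty) : Acyclic (G.deleteVerts S) := by
  rintro ⟨C, hC⟩
  obtain ⟨x, hx⟩ := hS C hC.of_deleteVerts
  exact (mem_sdiff.1 (hC.1.1 (mem_inter.1 hx).1)).2 (mem_inter.1 hx).2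

lemma exists_subset_acyclic_deleteVerts_minimal {G : Multigraph} {S : Finset ℕ}
    (hS : Acyclic (G.deleteVerts S)) :
    ∃ U ⊆ S, Acyclic (G.deleteVerts U) ∧
      ∀ u ∈ U, ∃ C, IsCycleOf (G.deleteVerts (U.erase u)) C ∧ u ∈ C.verts := by
  obtain ⟨U, hUmem, hUmin⟩ := exists_min_image
    (S.powerset.filter fun T => Acyclic (G.deleteVerts T)) card
    ⟨S, mem_filter.2 ⟨mem_powerset_self S, hS⟩⟩
  obtain ⟨hUS, hU⟩ := mem_filter.1 hUmem
  refine ⟨U, mem_powerset.1 hUS, hU, fun u hu => ?_⟩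
  have hnot : ¬ Acyclic (G.deleteVerts (U.erase u)) := fun hac =>
    (card_erase_lt_of_mem hu).not_ge <| hUmin _ <|
      mem_filter.2 ⟨mem_powerset.2 ((erase_subset u U).trans (mem_powerset.1 hUS)), hac⟩
  obtain ⟨C, hC⟩ := not_not.1 hnot
  refine ⟨C, hC, by_contra fun huC => hU ⟨C, hC.of_deleteVerts.deleteVerts ?_⟩⟩
  refine disjoint_left.2 fun x hx hxU => ?_
  have hxu : x ≠ u := fun h => huC (h ▸ hx)
  exact (mem_sdiff.1 (hC.1.1 hx)).2 (mem_erase.2 ⟨hxu, hxU⟩)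

/- Connectivity is used only through functions that agree on the two ends of every edge; this
avoids concatenating walks. -/
def IsEdgeInvariant {α : Type*} (K : Multigraph) (g : ℕ → α) : Prop :=
  ∀ e ∈ K.edges, ∀ a b, K.ends e = s(a, b) → g a = g b

section IsEdgeInvariant

variable {α : Type*} {K : Multigraph} {g : ℕ → α}

lemma IsWalk.of_cons {v e : ℕ} {vs es : List ℕ} (h : IsWalk K (v :: vs) (e :: es)) :
    IsWalk K vs es ∧ e ∈ K.edges ∧ K.ends e = s(v, vs.getD 0 0) := by
  obtain ⟨hlen, hv, he, hends⟩ := h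
  refine ⟨⟨by simpa using hlen, fun x hx => hv x (List.mem_cons_of_mem _ hx),
      fun x hx => he x (List.mem_cons_of_mem _ hx), fun i hi => ?_⟩,
    he e List.mem_cons_self, ?_⟩
  · simpa using hends (i + 1) (by simpa using hi)
  · simpa using hends 0 (by simp)

lemma IsWalk.apply_eq_apply_head (hg : K.IsEdgeInvariant g) :
    ∀ {vs es : List ℕ}, IsWalk K vs es → ∀ x ∈ vs, g x = g (vs.getD 0 0)
  | [], _, h, _, hx => by simp at hx
  | [v], _, _, x, hx => by rw [List.mem_singleton.1 hx]; rfl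
  | v :: w :: vs, [], h, _, _ => by simp [IsWalk] at h
  | v :: w :: vs, e :: es, h, x, hx => by
    obtain ⟨hw, he, hends⟩ := h.of_cons
    rw [List.getD_cons_zero]
    rcases List.mem_cons.1 hx with rfl | hx
    · rfl
    · rw [IsWalk.apply_eq_apply_head hg hw x hx]
      exact (hg e he _ _ hends).symm

lemma Connected.apply_eq_apply (hK : K.Connected) (hg : K.IsEdgeInvariant g) {x y : ℕ}
    (hx : x ∈ K.verts) (hy : y ∈ K.verts) : g x = g y := by
  obtain ⟨vs, es, hw, hne, rfl, rfl⟩ := hK.2 x hx y hy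
  exact (hw.apply_eq_apply_head hg _ (List.getD_length_sub_one_mem hne 0)).symm

lemma IsSubdivisionOf.apply_eq_apply {H G : Multigraph} (hsub : IsSubdivisionOf H G)
    (hH : H.Connected) (hg : G.IsEdgeInvariant g) {x y : ℕ}
    (hx : x ∈ G.verts) (hy : y ∈ G.verts) : g x = g y := by
  obtain ⟨φ, pv, pe, -, -, hpaths, -, hV, -⟩ := hsub
  have hpath : ∀ f ∈ H.edges, ∃ u v, H.ends f = s(u, v) ∧ g (φ v) = g (φ u) ∧
      ∀ z ∈ pv f, g z = g (φ u) := by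
    intro f hf
    obtain ⟨hw, -, -, -, ⟨u, v, hends, h0, hl⟩, -⟩ := hpaths f hf
    have hw' := hw.apply_eq_apply_head hg
    have hpv : pv f ≠ [] := by rintro h; simp [h, IsWalk] at hw
    refine ⟨u, v, hends, ?_, fun z hz => h0 ▸ hw' z hz⟩
    rw [← hl, ← h0]
    exact hw' _ (List.getD_length_sub_one_mem hpv 0)
  have hφ : H.IsEdgeInvariant (g ∘ φ) := by
    intro f hf a b hab
    obtain ⟨u, v, hends, hvu, -⟩ := hpath f hf
    rcases Sym2.eq_iff.1 (hends.symm.trans hab) with ⟨rfl, rfl⟩ | ⟨rfl, rfl⟩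
    exacts [hvu.symm, hvu]
  have hbranch : ∀ z ∈ G.verts, ∃ w ∈ H.verts, g z = g (φ w) := by
    intro z hz
    rcases mem_union.1 (hV ▸ hz) with hz | hz
    · obtain ⟨w, hw, rfl⟩ := mem_image.1 hz
      exact ⟨w, hw, rfl⟩
    · obtain ⟨f, hf, hzf⟩ := mem_biUnion.1 hz
      obtain ⟨u, v, hends, -, hpv⟩ := hpath f hf
      exact ⟨u, H.ends_mem f hf u (hends ▸ Sym2.mem_mk_left u v),
        hpv z (List.mem_toFinset.1 hzf)⟩
  obtain ⟨w, hw, hxw⟩ := hbranch x hx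
  obtain ⟨w', hw', hyw⟩ := hbranch y hy
  rw [hxw, hyw]
  exact hH.apply_eq_apply hφ hw hw'

end IsEdgeInvariant

noncomputable def incidenceVec : Sym2 ℕ → ℕ → ZMod 2 :=
  Sym2.lift ⟨fun a b => Pi.single a 1 + Pi.single b 1, fun _ _ => add_comm _ _⟩

@[simp]
lemma incidenceVec_mk (a b : ℕ) : incidenceVec s(a, b) = Pi.single a 1 + Pi.single b 1 := rfl

noncomputable def boundaryMap (G : Multigraph) :
    (G.edges → ZMod 2) →ₗ[ZMod 2] ℕ → ZMod 2 :=
  Fintype.linearCombination (ZMod 2) fun e : G.edges => incidenceVec (G.ends e)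

lemma incidenceVec_mem_range_boundaryMap (G : Multigraph) {e : ℕ} (he : e ∈ G.edges) :
    incidenceVec (G.ends e) ∈ LinearMap.range G.boundaryMap :=
  ⟨Pi.single ⟨e, he⟩ 1, by simp [boundaryMap]⟩

lemma IsSubdivisionOf.single_sub_single_mem_range_boundaryMap {H G : Multigraph}
    (hsub : IsSubdivisionOf H G) (hH : H.Connected) {x y : ℕ} (hx : x ∈ G.verts)
    (hy : y ∈ G.verts) : Pi.single x 1 - Pi.single y 1 ∈ LinearMap.range G.boundaryMap := by
  rw [← Submodule.Quotient.eq]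
  refine hsub.apply_eq_apply hH (g := fun z =>
    Submodule.Quotient.mk (p := LinearMap.range G.boundaryMap) (Pi.single z 1))
    (fun e he a b hab => ?_) hx hy
  rw [Submodule.Quotient.eq, ZModModule.sub_eq_add, ← incidenceVec_mk, ← hab]
  exact incidenceVec_mem_range_boundaryMap G he

lemma card_verts_le_finrank_range_boundaryMap_add_one (G : Multigraph)
    (hG : ∀ x ∈ G.verts, ∀ y ∈ G.verts,
      Pi.single x 1 - Pi.single y 1 ∈ LinearMap.range G.boundaryMap) :
    G.verts.card ≤ finrank (ZMod 2) (LinearMap.range G.boundaryMap) + 1 := by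
  rcases G.verts.eq_empty_or_nonempty with hV | ⟨v₀, hv₀⟩
  · simp [hV]
  let v : G.verts.erase v₀ → ℕ → ZMod 2 := fun x => Pi.single (x : ℕ) 1 - Pi.single v₀ 1
  have hind : LinearIndependent (ZMod 2) v := by
    refine linearIndependent_of_apply_eq_one_of_apply_eq_zero v (↑) (fun x => ?_)
      fun x y hxy => ?_
    · simp [v, (mem_erase.1 x.2).1]
    · simp [v, (mem_erase.1 x.2).1, Subtype.coe_ne_coe.2 hxy]
  have hspan : Submodule.span (ZMod 2) (Set.range v) ≤ LinearMap.range G.boundaryMap :=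
    Submodule.span_le.2 <| Set.range_subset_iff.2 fun x =>
      hG x (mem_of_mem_erase x.2) v₀ hv₀
  have := Submodule.finrank_mono hspan
  rw [finrank_span_eq_card hind, Fintype.card_coe, card_erase_of_mem hv₀] at this
  omega

lemma IsCycleOf.sum_incidenceVec_eq_zero {G C : Multigraph} (hC : IsCycleOf G C) :
    ∑ e ∈ C.edges, incidenceVec (G.ends e) = 0 := by
  obtain ⟨hsub, vs, es, -, hen, -, hlen, -, hCe, hends⟩ := hC
  calc ∑ e ∈ C.edges, incidenceVec (G.ends e)
      = ∑ i ∈ range es.length, incidenceVec (C.ends (es.getD i 0)) := by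
        rw [← sum_congr rfl fun e he => congrArg incidenceVec (hsub.2.2 e he), hCe,
          List.sum_toFinset _ hen, List.sum_map_eq_sum_range_getD]
    _ = ∑ i ∈ range vs.length,
          (Pi.single (vs.getD i 0) 1 + Pi.single (vs.getD ((i + 1) % vs.length) 0) 1) :=
        sum_congr (by rw [hlen]) fun i hi => by
          rw [hends i (hlen ▸ mem_range.1 hi), incidenceVec_mk]
    _ = 0 := by
      rw [sum_add_distrib, sum_range_succ_mod fun i => Pi.single (vs.getD i 0) 1,
        ZModModule.add_self]

lemma boundaryMap_indicator_eq_zero {G C : Multigraph} (hC : IsCycleOf G C) :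
    G.boundaryMap (fun e => if (e : ℕ) ∈ C.edges then 1 else 0) = 0 := by
  simp only [boundaryMap, Fintype.linearCombination_apply, ite_smul, one_smul, zero_smul]
  rw [sum_coe_sort G.edges fun e => if e ∈ C.edges then incidenceVec (G.ends e) else 0,
    sum_ite_mem, inter_eq_right.2 hC.1.2.1]
  exact hC.sum_incidenceVec_eq_zero

lemma card_le_finrank_ker_boundaryMap {G : Multigraph} {U : Finset ℕ}
    (hU : ∀ u ∈ U, ∃ C, IsCycleOf (G.deleteVerts (U.erase u)) C ∧ u ∈ C.verts) :
    U.card ≤ finrank (ZMod 2) (LinearMap.ker G.boundaryMap) := by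
  choose C hC huC using hU
  let c : U → G.edges → ZMod 2 := fun u e => if (e : ℕ) ∈ (C u u.2).edges then 1 else 0
  choose e he hue using fun u : U => (hC u u.2).of_deleteVerts.exists_mem_edges_mem_ends (huC u u.2)
  have hind : LinearIndependent (ZMod 2) c := by
    refine linearIndependent_of_apply_eq_one_of_apply_eq_zero c
      (fun u => ⟨e u, (hC u u.2).of_deleteVerts.1.2.1 (he u)⟩) (fun u => by simp [c, he u])
      fun u w huw => ?_
    -- the edges of `C w` avoid every vertex of `U` other than `w`, in particular `u`
    have hnot : e u ∉ (C w w.2).edges := fun hmem =>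
      (mem_filter.1 ((hC w w.2).1.2.1 hmem)).2 u (hue u)
        (mem_erase.2 ⟨Subtype.coe_ne_coe.2 huw, u.2⟩)
    simp [c, hnot]
  have hspan : Submodule.span (ZMod 2) (Set.range c) ≤ LinearMap.ker G.boundaryMap :=
    Submodule.span_le.2 <| Set.range_subset_iff.2 fun u =>
      boundaryMap_indicator_eq_zero (hC u u.2).of_deleteVerts
  have := Submodule.finrank_mono hspan
  rwa [finrank_span_eq_card hind, Fintype.card_coe] at this

lemma card_add_card_verts_le_card_edges_add_one {G : Multigraph} {U : Finset ℕ}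
    (hU : ∀ u ∈ U, ∃ C, IsCycleOf (G.deleteVerts (U.erase u)) C ∧ u ∈ C.verts)
    (hG : ∀ x ∈ G.verts, ∀ y ∈ G.verts,
      Pi.single x 1 - Pi.single y 1 ∈ LinearMap.range G.boundaryMap) :
    U.card + G.verts.card ≤ G.edges.card + 1 := by
  have hrank := LinearMap.finrank_range_add_finrank_ker G.boundaryMap
  rw [finrank_fintype_fun_eq_card, Fintype.card_coe] at hrank
  have := card_le_finrank_ker_boundaryMap hU
  have := card_verts_le_finrank_range_boundaryMap_add_one G hG
  omega

lemma IsSubdivisionOf.card_edges_add_card_verts_le {H G : Multigraph}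
    (hsub : IsSubdivisionOf H G) : G.edges.card + H.verts.card ≤ G.verts.card + H.edges.card := by
  obtain ⟨φ, pv, pe, hinj, -, hpaths, hdisj, hV, hE⟩ := hsub
  let inner : ℕ → List ℕ := fun f => (pv f).tail.dropLast
  have hmem_pv : ∀ f z, z ∈ inner f → z ∈ pv f := fun f z hz =>
    List.mem_of_mem_tail (List.dropLast_subset _ hz)
  have hlen : ∀ f ∈ H.edges, (pe f).length = (inner f).length + 1 := by
    intro f hf
    obtain ⟨hw, hne, -⟩ := hpaths f hf
    have := List.length_pos_iff.2 hne
    simp only [inner, List.length_dropLast, List.length_tail, hw.1]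
    omega
  have hedges : G.edges.card ≤ ∑ f ∈ H.edges, (inner f).length + H.edges.card :=
    calc G.edges.card ≤ ∑ f ∈ H.edges, (pe f).length := by
          rw [hE]
          exact card_biUnion_le.trans (sum_le_sum fun f _ => List.toFinset_card_le _)
      _ = _ := by rw [sum_congr rfl hlen, sum_add_distrib, sum_const, smul_eq_mul, mul_one]
  let B := H.edges.biUnion fun f => (inner f).toFinset
  have hB : B.card = ∑ f ∈ H.edges, (inner f).length := by
    rw [card_biUnion fun f hf f' hf' hff' => disjoint_left.2 fun z hz hz' =>
      (hdisj f hf f' hf' hff').1 z (List.mem_toFinset.1 hz)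
        (List.mem_toFinset.2 (hmem_pv f' z (List.mem_toFinset.1 hz')))]
    exact sum_congr rfl fun f hf => List.toFinset_card_of_nodup
      ((hpaths f hf).2.2.2.1.sublist (List.dropLast_sublist _))
  have hφB : Disjoint (H.verts.image φ) B := by
    refine disjoint_left.2 fun z hz hzB => ?_
    obtain ⟨w, hw, rfl⟩ := mem_image.1 hz
    obtain ⟨f, hf, hzf⟩ := mem_biUnion.1 hzB
    exact (hpaths f hf).2.2.2.2.2 _ (List.mem_toFinset.1 hzf) w hw rfl
  have hverts : H.verts.image φ ∪ B ⊆ G.verts := by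
    rw [hV]
    exact union_subset_union subset_rfl (biUnion_mono fun f _ z hz =>
      List.mem_toFinset.2 (hmem_pv f z (List.mem_toFinset.1 hz)))
  have := card_le_card hverts
  rw [card_union_of_disjoint hφB, card_image_of_injOn hinj, hB] at this
  omega

end Multigraph

open Multigraph in
theorem exists_small_hitting_set_of_scycle_subdivision_general
    (H : Multigraph) (hH : H.Connected)
    (G : Multigraph) (S : Finset ℕ)
    (hsub : IsSubdivisionOf H G)
    (hcyc : ∀ C, IsCycleOf G C → (C.verts ∩ S).Nonempty) :
    ∃ U ⊆ S, (U.card : ℤ) ≤ (H.edges.card : ℤ) - (H.verts.card : ℤ) + 1 ∧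
      Acyclic (G.deleteVerts U) := by
  obtain ⟨U, hUS, hUacyc, hUcyc⟩ :=
    exists_subset_acyclic_deleteVerts_minimal (acyclic_deleteVerts_of_forall_inter_nonempty hcyc)
  have hcyclomatic := card_add_card_verts_le_card_edges_add_one hUcyc
    fun x hx y hy => hsub.single_sub_single_mem_range_boundaryMap hH hx hy
  have hsubdivision := hsub.card_edges_add_card_verts_le
  exact ⟨U, hUS, by omega, hUacyc⟩

open Multigraph in
/-- Let `H` be a connected graph and `(G, S)` a rooted graph such that `G` is an
`H`-subdivision in which every cycle is an S-cycle.  Then `G` contains a vertex set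
`U ⊆ S` with `|U| ≤ |E(H)| − |V(H)| + 1` such that `G − U` has no cycles. -/
theorem exists_small_hitting_set_of_scycle_subdivision
    (H : Multigraph) (hH : H.Connected)
    (G : Multigraph) (S : Finset ℕ) (hS : S ⊆ G.verts)
    (hsub : IsSubdivisionOf H G)
    (hcyc : ∀ C, IsCycleOf G C → (C.verts ∩ S).Nonempty) :
    ∃ U ⊆ S, (U.card : ℤ) ≤ (H.edges.card : ℤ) - (H.verts.card : ℤ) + 1 ∧
      Acyclic (G.deleteVerts U) :=
  exists_small_hitting_set_of_scycle_subdivision_general H hH G S hsub hcyc
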